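/- Let A be a v-normalized n×n matrix over a field K (i.e., a_vj = a_jv = 1 for all j ≠ v) and let I ⊆ [n]∖{v}. Then {I, [n]∖I} is an HL-bipartition of A if and only if I is a clan of the labelled 2-structure g_A restricted to [n]∖{v}. -/

import Mathlib

/-!
For a normalized matrix, the column of the normalizing index `v` is constantly `1` on both
off-diagonal blocks, and a matrix with a column of ones has rank at most `1` exactly when all
its rows are equal (every `2 × 2` minor through the column of ones is a difference of two
entries in a column). Rows of `A[I, Iᶜ]` and of `A[Iᶜ, I]ᵀ` being equal is the clan condition,
the column `v` itself contributing nothing since it is constant.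
-/

open Matrix Finset

/-- Rank of the submatrix of `A` with row indices in `X` and column indices in `Y`. -/
noncomputable def subRank {n : ℕ} {K : Type*} [Field K] (A : Matrix (Fin n) (Fin n) K)
    (X Y : Finset (Fin n)) : ℕ :=
  (A.submatrix (fun i : {a // a ∈ X} => i.1) (fun j : {a // a ∈ Y} => j.1)).rank

namespace Matrix

variable {m l K : Type*} [Fintype l] [Field K]

theorem det_fin_two_submatrix_eq_zero_of_rank_le_one {M : Matrix m l K} (hM : M.rank ≤ 1)
    (r : Fin 2 → m) (c : Fin 2 → l) : (M.submatrix r c).det = 0 := by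
  by_contra hdet
  have hrank : (M.submatrix r c).rank = 2 := by
    simpa using rank_of_isUnit _ ((isUnit_iff_isUnit_det _).mpr (Ne.isUnit hdet))
  have := rank_submatrix_le M r c
  omega

theorem rank_le_one_of_forall_row_eq {M : Matrix m l K} (h : ∀ i i' j, M i j = M i' j) :
    M.rank ≤ 1 := by
  obtain ⟨w, rfl⟩ : ∃ w : l → K, M = vecMulVec 1 w := by
    rcases isEmpty_or_nonempty m with hm | ⟨⟨i₀⟩⟩
    · exact ⟨0, ext fun i => isEmptyElim i⟩
    · exact ⟨M i₀, ext fun i j => by simp [vecMulVec_apply, h i i₀ j]⟩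
  exact rank_vecMulVec_le _ _

theorem forall_row_eq_of_rank_le_one {M : Matrix m l K} (hM : M.rank ≤ 1) {j₀ : l}
    (hj₀ : ∀ i, M i j₀ = 1) (i i' : m) (j : l) : M i j = M i' j := by
  have hminor := det_fin_two_submatrix_eq_zero_of_rank_le_one hM ![i, i'] ![j₀, j]
  simp only [det_fin_two, submatrix_apply, Matrix.cons_val_zero, Matrix.cons_val_one,
    hj₀, one_mul, mul_one] at hminor
  exact (sub_eq_zero.mp hminor).symm

theorem rank_le_one_iff_forall_row_eq {M : Matrix m l K} {j₀ : l} (hj₀ : ∀ i, M i j₀ = 1) :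
    M.rank ≤ 1 ↔ ∀ i i' j, M i j = M i' j :=
  ⟨fun hM => forall_row_eq_of_rank_le_one hM hj₀, rank_le_one_of_forall_row_eq⟩

end Matrix

section subRank

variable {n : ℕ} {K : Type*} [Field K]

theorem subRank_transpose (A : Matrix (Fin n) (Fin n) K) (X Y : Finset (Fin n)) :
    subRank Aᵀ X Y = subRank A Y X := by
  rw [subRank, subRank, ← rank_transpose]
  rfl

theorem subRank_le_one_iff (A : Matrix (Fin n) (Fin n) K) {X Y : Finset (Fin n)} {y₀ : Fin n}
    (hy₀ : y₀ ∈ Y) (hcol : ∀ x ∈ X, A x y₀ = 1) :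
    subRank A X Y ≤ 1 ↔ ∀ a ∈ X, ∀ b ∈ X, ∀ y ∈ Y, A a y = A b y := by
  rw [subRank, rank_le_one_iff_forall_row_eq (j₀ := ⟨y₀, hy₀⟩) fun x => hcol x.1 x.2]
  simp only [submatrix_apply, Subtype.forall]

end subRank

/-- Let `A` be a `v`-normalized `n × n` matrix over a field `K` and `I ⊆ [n] \ {v}`.
Then `{I, [n] \ I}` is an HL-bipartition of `A` (both off-diagonal blocks have rank at
most `1`) if and only if `I` is a clan of the labelled 2-structure `g_A` restricted to
`[n] \ {v}`. -/
theorem HL_bipartition_iff_clan_of_normalized {n : ℕ} {K : Type*} [Field K]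
    (A : Matrix (Fin n) (Fin n) K) (v : Fin n)
    (hnorm : ∀ j, j ≠ v → A v j = 1 ∧ A j v = 1)
    (I : Finset (Fin n)) (hI : I ⊆ {v}ᶜ) :
    (subRank A I Iᶜ ≤ 1 ∧ subRank A Iᶜ I ≤ 1) ↔
      (∀ a ∈ I, ∀ b ∈ I, ∀ x ∈ ({v}ᶜ : Finset (Fin n)) \ I,
        A a x = A b x ∧ A x a = A x b) := by
  have hne : ∀ a ∈ I, a ≠ v := fun a ha => by simpa using hI ha
  have hv : v ∈ Iᶜ := mem_compl.mpr fun hvI => hne v hvI rfl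
  rw [← subRank_transpose A I Iᶜ, subRank_le_one_iff A hv fun a ha => (hnorm a (hne a ha)).2,
    subRank_le_one_iff Aᵀ hv fun a ha => (hnorm a (hne a ha)).1]
  simp only [transpose_apply]
  constructor
  · rintro ⟨hrow, hcol⟩ a ha b hb x hx
    have hxI : x ∈ Iᶜ := mem_compl.mpr (mem_sdiff.mp hx).2
    exact ⟨hrow a ha b hb x hxI, hcol a ha b hb x hxI⟩
  · intro hclan
    have hclan' : ∀ a ∈ I, ∀ b ∈ I, ∀ x ∈ Iᶜ, A a x = A b x ∧ A x a = A x b := by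
      intro a ha b hb x hx
      rcases eq_or_ne x v with rfl | hxv
      · simp only [hnorm a (hne a ha), hnorm b (hne b hb), and_self]
      · exact hclan a ha b hb x (mem_sdiff.mpr ⟨by simpa using hxv, mem_compl.mp hx⟩)
    simpa only [forall_and] using hclan'
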